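/- arXiv:1607.08117 — 2 statements merged into one kernel-verified Lean document; each statement's English description precedes it below -/
import Mathlib

section
/- Let ℓ be a positive integer, 0 ≤ v ≤ 5ℓ − 1, and let Γ₁, Γ₂ be the enumerating functions of ⟨2, 10ℓ+1⟩ and ⟨5, 25ℓ+1⟩. Then min over 0 ≤ k ≤ 5ℓ of (Γ₂(k+v) − Γ₁(k)) equals 5v, attained at k = 0. -/
/-- Membership in the numerical semigroup `⟨2, 10ℓ+1⟩`. -/
def inGamma1 (ℓ : ℕ) (x : ℕ) : Prop := ∃ a b : ℕ, x = 2 * a + (10 * ℓ + 1) * b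

/-- Membership in the numerical semigroup `⟨5, 25ℓ+1⟩`. -/
def inGamma2 (ℓ : ℕ) (x : ℕ) : Prop := ∃ a b : ℕ, x = 5 * a + (25 * ℓ + 1) * b

/-! Below `b`, the semigroup `⟨a, b⟩` consists of the multiples of `a`; below `2b`, of the
numbers congruent to `0` or `b` modulo `a`. Hence `⟨2, 10ℓ+1⟩` starts with the even numbers,
and `⟨5, 25ℓ+1⟩` with the multiples of `5` up to `25ℓ`, followed by the numbers `≡ 0, 1 (mod 5)`.
Past index `5ℓ` the enumeration of `Γ₂` still gains `5` every two steps, more than the `4` that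
`Γ₁` gains, so `Γ₂(k+v) − Γ₁(k)` never drops below its value `5v` at `k = 0`. -/

open Finset

theorem Nat.nth_eq_of_strictMono_of_forall_le {p : ℕ → Prop} {f : ℕ → ℕ} (hf : StrictMono f)
    {n : ℕ} (hp : ∀ x ≤ f n, p x ↔ ∃ j ≤ n, f j = x) {j : ℕ} (hj : j ≤ n) :
    Nat.nth p j = f j := by
  classical
  have hcount : Nat.count p (f j) = j := by
    have hfilter : (range (f j)).filter p = (range j).image f := by
      ext x
      simp only [mem_filter, mem_range, mem_image]
      constructor
      · rintro ⟨hx, hpx⟩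
        obtain ⟨i, -, rfl⟩ := (hp x (hx.le.trans (hf.monotone hj))).1 hpx
        exact ⟨i, hf.lt_iff_lt.1 hx, rfl⟩
      · rintro ⟨i, hi, rfl⟩
        exact ⟨hf hi, (hp _ (hf.monotone (hi.le.trans hj))).2 ⟨i, by omega, rfl⟩⟩
    rw [Nat.count_eq_card_filter_range, hfilter, Finset.card_image_of_injective _ hf.injective,
      card_range]
  conv_lhs => rw [← hcount]
  exact Nat.nth_count ((hp _ (hf.monotone hj)).2 ⟨j, hj, rfl⟩)

theorem exists_eq_mul_add_mul_iff_of_lt_two_mul {a b x : ℕ} (hx : x < 2 * b) :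
    (∃ s t, x = a * s + b * t) ↔ a ∣ x ∨ (b ≤ x ∧ a ∣ x - b) := by
  constructor
  · rintro ⟨s, t, rfl⟩
    obtain rfl | rfl : t = 0 ∨ t = 1 := by
      have : b * t < b * 2 := by omega
      have := lt_of_mul_lt_mul_left this
      omega
    · exact Or.inl ⟨s, by ring⟩
    · exact Or.inr ⟨by omega, ⟨s, by omega⟩⟩
  · rintro (⟨s, rfl⟩ | ⟨hbx, s, hs⟩)
    · exact ⟨s, 0, by ring⟩
    · exact ⟨s, 1, by omega⟩

theorem nth_inGamma1 {ℓ k : ℕ} (hk : k ≤ 5 * ℓ) : Nat.nth (inGamma1 ℓ) k = 2 * k := by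
  refine Nat.nth_eq_of_strictMono_of_forall_le (strictMono_mul_left_of_pos two_pos)
    (fun x hx => ?_) hk
  rw [inGamma1, exists_eq_mul_add_mul_iff_of_lt_two_mul (by omega)]
  constructor
  · rintro (⟨c, rfl⟩ | ⟨hx', -⟩)
    · exact ⟨c, by omega, rfl⟩
    · omega
  · rintro ⟨j, -, rfl⟩
    exact Or.inl (dvd_mul_right 2 j)

/-- The paper's `Γ₂(j)` for `j ≤ 15ℓ`. -/
def gamma2Enum (ℓ j : ℕ) : ℕ :=
  if j ≤ 5 * ℓ then 5 * j else 25 * ℓ + 5 * ((j - 5 * ℓ) / 2) + (j - 5 * ℓ) % 2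

theorem strictMono_gamma2Enum (ℓ : ℕ) : StrictMono (gamma2Enum ℓ) :=
  strictMono_nat_of_lt_succ fun j => by unfold gamma2Enum; split_ifs <;> omega

theorem nth_inGamma2 {ℓ j : ℕ} (hj : j ≤ 10 * ℓ) :
    Nat.nth (inGamma2 ℓ) j = gamma2Enum ℓ j := by
  refine Nat.nth_eq_of_strictMono_of_forall_le (strictMono_gamma2Enum ℓ) (fun x hx => ?_) hj
  unfold gamma2Enum at hx
  rw [inGamma2, exists_eq_mul_add_mul_iff_of_lt_two_mul (by split_ifs at hx <;> omega)]
  constructor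
  · intro hmem
    refine ⟨if x ≤ 25 * ℓ then x / 5 else 5 * ℓ + 2 * ((x - 25 * ℓ) / 5) + (x - 25 * ℓ) % 5,
      by split_ifs at hx ⊢ <;> omega, ?_⟩
    unfold gamma2Enum
    split_ifs at hx ⊢ <;> omega
  · rintro ⟨i, hi, rfl⟩
    unfold gamma2Enum
    split_ifs <;> omega

theorem stmt_8_general (ℓ v : ℕ) (hv : v ≤ 5 * ℓ - 1) :
    (∀ k : ℕ, k ≤ 5 * ℓ →
      (5 * v : ℤ) ≤ (Nat.nth (inGamma2 ℓ) (k + v) : ℤ) - (Nat.nth (inGamma1 ℓ) k : ℤ)) ∧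
    (Nat.nth (inGamma2 ℓ) (0 + v) : ℤ) - (Nat.nth (inGamma1 ℓ) 0 : ℤ) = 5 * v := by
  constructor
  · intro k hk
    have hbound : 5 * v + 2 * k ≤ gamma2Enum ℓ (k + v) := by
      unfold gamma2Enum; split_ifs <;> omega
    rw [nth_inGamma1 hk, nth_inGamma2 (by omega)]
    omega
  · rw [nth_inGamma1 (Nat.zero_le _), nth_inGamma2 (by omega), zero_add, gamma2Enum,
      if_pos (by omega)]
    push_cast
    ring

/-- For `0 ≤ v ≤ 5ℓ − 1`, the minimum over `0 ≤ k ≤ 5ℓ` of `Γ₂(k+v) − Γ₁(k)`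
equals `5v`, attained at `k = 0`. -/
theorem stmt_8 (ℓ v : ℕ) (hℓ : 0 < ℓ) (hv : v ≤ 5 * ℓ - 1) :
    (∀ k : ℕ, k ≤ 5 * ℓ →
      (5 * v : ℤ) ≤ (Nat.nth (inGamma2 ℓ) (k + v) : ℤ) - (Nat.nth (inGamma1 ℓ) k : ℤ)) ∧
    (Nat.nth (inGamma2 ℓ) (0 + v) : ℤ) - (Nat.nth (inGamma1 ℓ) 0 : ℤ) = 5 * v :=
  stmt_8_general ℓ v hv
end

section
/- Let ℓ ≥ 1 and for v ≥ 0 define N(v) = max(0, 45ℓ − min_{0 ≤ k ≤ 5ℓ}(Γ₂(k+v) − Γ₁(k))), where Γ₁, Γ₂ are the enumerating functions of the numerical semigroups ⟨2,10ℓ+1⟩ and ⟨5,25ℓ+1⟩ respectively. Then min over v ≥ 0 of (N(v) + 2v) equals 26ℓ + 1. -/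
/-- `N(v) = max(0, 45ℓ − min_{0 ≤ k ≤ 5ℓ} (Γ₂(k+v) − Γ₁(k)))`, where `Γ₁, Γ₂` are the
enumerating functions (`Nat.nth`) of the two semigroups. -/
noncomputable def Nfun (ℓ v : ℕ) : ℕ :=
  ((45 * ℓ : ℤ) -
    (Finset.Icc 0 (5 * ℓ)).inf' ⟨0, by simp⟩
      (fun k => (Nat.nth (inGamma2 ℓ) (k + v) : ℤ) - (Nat.nth (inGamma1 ℓ) k : ℤ))).toNat

/-! The enumerations are explicit: `Γ₁(k) = 2k` for `k ≤ 5ℓ` and `Γ₂` is piecewise affine, since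
a natural number `x` with `x % a = r` lies in `⟨a, ac + 1⟩` exactly when `x ≥ r (ac + 1)`.
Hence `N(v) + 2v` becomes an explicit piecewise-linear expression in `v`. At `v = 13ℓ` every
`Γ₂(k + 13ℓ) - 2k` is at least `45ℓ - 1`, with equality at `k = 1`, so `N(13ℓ) = 1`. For
`v ≤ 13ℓ` a suitable `k ∈ {0, 1}` gives `Γ₂(k + v) - 2k ≤ 19ℓ + 2v - 1`, whence
`N(v) + 2v ≥ 26ℓ + 1`; for `v > 13ℓ` already `2v ≥ 26ℓ + 2`. -/

theorem Nat.nth_eq_of_strictMono {p : ℕ → Prop} {f : ℕ → ℕ} (hf : StrictMono f)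
    (hmem : ∀ k, p (f k)) (hlt : ∀ x < f 0, ¬p x)
    (hgap : ∀ k x, f k < x → x < f (k + 1) → ¬p x) : Nat.nth p = f := by
  have hrange : Set.range f = Set.ofPred p := by
    refine Set.Subset.antisymm (Set.range_subset_iff.2 hmem) fun x hx => ?_
    have hex : ∃ k, x < f k := ⟨x + 1, x.lt_succ_self.trans_le (hf.id_le _)⟩
    rcases hk : Nat.find hex with _ | j
    · exact absurd hx (hlt x (hk ▸ Nat.find_spec hex))
    · have hxj : f j ≤ x := not_lt.1 (Nat.find_min hex (by omega))
      rcases hxj.lt_or_eq with hlt' | heq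
      · exact absurd hx (hgap j x hlt' (hk ▸ Nat.find_spec hex))
      · exact ⟨j, heq⟩
  have hinf : (Set.ofPred p).Infinite := hrange ▸ Set.infinite_range_of_injective hf.injective
  exact Set.range_injOn_strictMono (Nat.nth_strictMono hinf) hf
    ((Nat.range_nth_of_infinite hinf).trans hrange.symm)

theorem Nat.exists_eq_mul_add_mul_iff_mod_mul_le (a c x : ℕ) :
    (∃ m n, x = a * m + (a * c + 1) * n) ↔ x % a * (a * c + 1) ≤ x := by
  constructor
  · rintro ⟨m, n, rfl⟩
    have hmod : (a * m + (a * c + 1) * n) % a = n % a := by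
      rw [show a * m + (a * c + 1) * n = a * (m + c * n) + n by ring, Nat.mul_add_mod]
    rw [hmod]
    calc n % a * (a * c + 1) ≤ n * (a * c + 1) := Nat.mul_le_mul_right _ (Nat.mod_le n a)
      _ ≤ a * m + (a * c + 1) * n := by rw [mul_comm n]; exact Nat.le_add_left _ _
  · intro h
    rcases Nat.eq_zero_or_pos a with rfl | ha
    · exact ⟨0, x, by simp⟩
    have hdiv := Nat.div_add_mod x a
    have hcr : c * (x % a) ≤ x / a := by
      refine Nat.le_of_mul_le_mul_left ?_ ha
      nlinarith
    obtain ⟨d, hd⟩ := Nat.exists_eq_add_of_le hcr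
    refine ⟨d, x % a, ?_⟩
    calc x = a * (x / a) + x % a := hdiv.symm
      _ = a * d + (a * c + 1) * (x % a) := by rw [hd]; ring

theorem inGamma1_iff (ℓ x : ℕ) : inGamma1 ℓ x ↔ x % 2 = 0 ∨ 10 * ℓ + 1 ≤ x := by
  rw [inGamma1, show 10 * ℓ + 1 = 2 * (5 * ℓ) + 1 by ring,
    Nat.exists_eq_mul_add_mul_iff_mod_mul_le]
  rcases Nat.mod_two_eq_zero_or_one x with h | h <;> rw [h] <;> omega

theorem inGamma2_iff (ℓ x : ℕ) : inGamma2 ℓ x ↔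
    x % 5 = 0 ∨ (x % 5 = 1 ∧ 25 * ℓ + 1 ≤ x) ∨ (x % 5 = 2 ∧ 50 * ℓ + 2 ≤ x) ∨
      (x % 5 = 3 ∧ 75 * ℓ + 3 ≤ x) ∨ (x % 5 = 4 ∧ 100 * ℓ + 4 ≤ x) := by
  rw [inGamma2, show 25 * ℓ + 1 = 5 * (5 * ℓ) + 1 by ring,
    Nat.exists_eq_mul_add_mul_iff_mod_mul_le]
  have : x % 5 < 5 := Nat.mod_lt x (by norm_num)
  interval_cases h : x % 5 <;> omega

def gamma1 (ℓ k : ℕ) : ℕ := if k ≤ 5 * ℓ then 2 * k else 5 * ℓ + k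

def gamma2 (ℓ k : ℕ) : ℕ :=
  if k ≤ 5 * ℓ then 5 * k
  else if k ≤ 15 * ℓ then 25 * ℓ + 5 * ((k - 5 * ℓ) / 2) + (k - 5 * ℓ) % 2
  else if k ≤ 30 * ℓ then 50 * ℓ + 5 * ((k - 15 * ℓ) / 3) + (k - 15 * ℓ) % 3
  else if k ≤ 50 * ℓ then 75 * ℓ + 5 * ((k - 30 * ℓ) / 4) + (k - 30 * ℓ) % 4
  else 50 * ℓ + k

theorem nth_inGamma1_s17 (ℓ : ℕ) : Nat.nth (inGamma1 ℓ) = gamma1 ℓ := by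
  refine Nat.nth_eq_of_strictMono (strictMono_nat_of_lt_succ fun k => ?mono) (fun k => ?mem)
    (fun x hx => ?lt) (fun k x h₁ h₂ => ?gap)
  case mono => unfold gamma1; split_ifs <;> omega
  case mem => rw [inGamma1_iff]; unfold gamma1; split_ifs <;> omega
  case lt => simp [gamma1] at hx
  case gap => rw [inGamma1_iff]; unfold gamma1 at h₁ h₂; split_ifs at h₁ h₂ <;> omega

theorem nth_inGamma2_s17 (ℓ : ℕ) : Nat.nth (inGamma2 ℓ) = gamma2 ℓ := by
  refine Nat.nth_eq_of_strictMono (strictMono_nat_of_lt_succ fun k => ?mono) (fun k => ?mem)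
    (fun x hx => ?lt) (fun k x h₁ h₂ => ?gap)
  case mono => unfold gamma2; split_ifs <;> omega
  case mem => rw [inGamma2_iff]; unfold gamma2; split_ifs <;> omega
  case lt => simp [gamma2] at hx
  case gap =>
    rw [inGamma2_iff]
    unfold gamma2 at h₁ h₂
    rintro (h | ⟨h, hx⟩ | ⟨h, hx⟩ | ⟨h, hx⟩ | ⟨h, hx⟩) <;> split_ifs at h₁ h₂ <;> omega

theorem Int.toNat_sub_inf'_le {ι : Type*} {s : Finset ι} (hs : s.Nonempty) {f : ι → ℤ} {c : ℤ}
    {n : ℕ} (h : ∀ i ∈ s, c ≤ f i + n) : (c - s.inf' hs f).toNat ≤ n := by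
  rw [Int.toNat_le, sub_le_comm, Finset.le_inf'_iff]
  exact fun i hi => by linarith [h i hi]

theorem Int.le_toNat_sub_inf' {ι : Type*} {s : Finset ι} (hs : s.Nonempty) {f : ι → ℤ} {c : ℤ}
    {n : ℕ} {i : ι} (hi : i ∈ s) (h : f i + n ≤ c) : n ≤ (c - s.inf' hs f).toNat := by
  have : (n : ℤ) ≤ c - s.inf' hs f := by linarith [Finset.inf'_le f hi]
  exact_mod_cast this.trans (Int.self_le_toNat _)

theorem gamma1_of_le {ℓ k : ℕ} (hk : k ≤ 5 * ℓ) : gamma1 ℓ k = 2 * k := if_pos hk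

theorem Nfun_le_of_forall {ℓ v n : ℕ} (h : ∀ k ≤ 5 * ℓ, 45 * ℓ + 2 * k ≤ gamma2 ℓ (k + v) + n) :
    Nfun ℓ v ≤ n := by
  refine Int.toNat_sub_inf'_le _ fun k hk => ?_
  have hk : k ≤ 5 * ℓ := (Finset.mem_Icc.1 hk).2
  rw [nth_inGamma1_s17, nth_inGamma2_s17, gamma1_of_le hk]
  have hbound := h k hk
  push_cast
  omega

theorem le_Nfun_of_le {ℓ v n k : ℕ} (hk : k ≤ 5 * ℓ) (h : gamma2 ℓ (k + v) + n ≤ 45 * ℓ + 2 * k) :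
    n ≤ Nfun ℓ v := by
  refine Int.le_toNat_sub_inf' _ (Finset.mem_Icc.2 ⟨k.zero_le, hk⟩) ?_
  rw [nth_inGamma1_s17, nth_inGamma2_s17, gamma1_of_le hk]
  push_cast
  omega

theorem Nfun_thirteen_mul {ℓ : ℕ} (hℓ : 0 < ℓ) : Nfun ℓ (13 * ℓ) = 1 :=
  le_antisymm (Nfun_le_of_forall fun k hk => by unfold gamma2; split_ifs <;> omega)
    (le_Nfun_of_le (k := 1) (by omega) (by unfold gamma2; split_ifs <;> omega))

theorem le_Nfun_add_two_mul {ℓ v : ℕ} (hℓ : 0 < ℓ) (hv : v ≤ 13 * ℓ) :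
    26 * ℓ + 1 ≤ Nfun ℓ v + 2 * v := by
  -- for `v > 5ℓ`, `k` makes `k + v - 5ℓ` odd, so that `Γ₂(k + v) ≡ 1 [MOD 5]`
  have : 26 * ℓ + 1 - 2 * v ≤ Nfun ℓ v :=
    le_Nfun_of_le (k := (v + ℓ + 1) % 2) (by omega) (by unfold gamma2; split_ifs <;> omega)
  omega

/-- `min_{v ≥ 0} (N(v) + 2v) = 26ℓ + 1`. -/
theorem stmt_17 (ℓ : ℕ) (hℓ : 0 < ℓ) :
    sInf {x : ℕ | ∃ v : ℕ, x = Nfun ℓ v + 2 * v} = 26 * ℓ + 1 := by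
  refine IsLeast.csInf_eq ⟨⟨13 * ℓ, by rw [Nfun_thirteen_mul hℓ]; ring⟩, ?_⟩
  rintro _ ⟨v, rfl⟩
  rcases le_or_gt v (13 * ℓ) with hv | hv
  · exact le_Nfun_add_two_mul hℓ hv
  · omega
end
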